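/- Let P ∈ ℝ^{m×(L+1)p} satisfy P · I_L = [I_m, 0], and define Ã := A − B P O_L. Then the output-nulling subspace V₀ is Ã-invariant: for every ξ ∈ V₀, Ã ξ ∈ V₀. -/

import Mathlib

/-!
If an input `u` keeps the output of the trajectory from `ξ` at zero, stacking the first `L + 1`
output equations gives `O_L ξ + I_L (u_0, …, u_L) = 0`. Multiplying by `P` yields
`P O_L ξ = -u_0`, so `Ã ξ = A ξ + B u_0 = x_1`, the next state of that trajectory, and the
shifted input `k ↦ u_{k+1}` keeps the output from `x_1` at zero.
-/

open Matrix

/-- Block observability matrix `O_L` with block rows `C A^k`, `k = 0,…,L`. -/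
noncomputable def obsMat {n p : ℕ} (A : Matrix (Fin n) (Fin n) ℝ)
    (C : Matrix (Fin p) (Fin n) ℝ) (L : ℕ) :
    Matrix (Fin (L + 1) × Fin p) (Fin n) ℝ :=
  fun kr j => (C * A ^ (kr.1 : ℕ)) kr.2 j

/-- Block invertibility (Toeplitz) matrix `I_L` of the LTI system `(A,B,C,D)`. -/
noncomputable def invMat {n m p : ℕ} (A : Matrix (Fin n) (Fin n) ℝ)
    (B : Matrix (Fin n) (Fin m) ℝ) (C : Matrix (Fin p) (Fin n) ℝ)
    (D : Matrix (Fin p) (Fin m) ℝ) (L : ℕ) :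
    Matrix (Fin (L + 1) × Fin p) (Fin (L + 1) × Fin m) ℝ :=
  fun jr ic =>
    if (jr.1 : ℕ) = (ic.1 : ℕ) then D jr.2 ic.2
    else if (ic.1 : ℕ) < (jr.1 : ℕ) then
      (C * A ^ ((jr.1 : ℕ) - (ic.1 : ℕ) - 1) * B) jr.2 ic.2
    else 0

/-- The block matrix `[I_m, 0] ∈ ℝ^{m × (L+1)m}`. -/
noncomputable def idZero (m L : ℕ) : Matrix (Fin m) (Fin (L + 1) × Fin m) ℝ :=
  fun r ic => if (ic.1 : ℕ) = 0 ∧ r = ic.2 then 1 else 0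

/-- The state sequence of `x_{k+1} = A x_k + B u_k` from initial state `ξ`. -/
noncomputable def stateSeq {n m : ℕ} (A : Matrix (Fin n) (Fin n) ℝ)
    (B : Matrix (Fin n) (Fin m) ℝ) (ξ : Fin n → ℝ) (u : ℕ → Fin m → ℝ) :
    ℕ → Fin n → ℝ
  | 0 => ξ
  | k + 1 => A.mulVec (stateSeq A B ξ u k) + B.mulVec (u k)

/-- The output-nulling subspace `V₀`: states from which some input sequence keeps the
output `y_k = C x_k + D u_k` identically zero. -/
def outputNulling {n m p : ℕ} (A : Matrix (Fin n) (Fin n) ℝ)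
    (B : Matrix (Fin n) (Fin m) ℝ) (C : Matrix (Fin p) (Fin n) ℝ)
    (D : Matrix (Fin p) (Fin m) ℝ) : Set (Fin n → ℝ) :=
  {ξ | ∃ u : ℕ → Fin m → ℝ, ∀ k, C.mulVec (stateSeq A B ξ u k) + D.mulVec (u k) = 0}

theorem stateSeq_eq_pow_mulVec_add_sum {n m : ℕ} (A : Matrix (Fin n) (Fin n) ℝ)
    (B : Matrix (Fin n) (Fin m) ℝ) (ξ : Fin n → ℝ) (u : ℕ → Fin m → ℝ) (k : ℕ) :
    stateSeq A B ξ u k = A ^ k *ᵥ ξ + ∑ i ∈ Finset.range k, (A ^ (k - i - 1) * B) *ᵥ u i := by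
  induction k with
  | zero => simp [stateSeq]
  | succ k ih =>
    have hpow : ∀ i ∈ Finset.range k,
        (A ^ (k + 1 - i - 1) * B) *ᵥ u i = A *ᵥ ((A ^ (k - i - 1) * B) *ᵥ u i) := fun i hi => by
      rw [show k + 1 - i - 1 = k - i - 1 + 1 by grind, pow_succ', Matrix.mul_assoc, mulVec_mulVec]
    rw [stateSeq, ih, Finset.sum_range_succ, Finset.sum_congr rfl hpow]
    simp only [mulVec_add, mulVec_sum, mulVec_mulVec, ← pow_succ', Nat.add_sub_cancel_left,
      Nat.sub_self, pow_zero, Matrix.one_mul, add_assoc]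

theorem stateSeq_stateSeq_one {n m : ℕ} (A : Matrix (Fin n) (Fin n) ℝ)
    (B : Matrix (Fin n) (Fin m) ℝ) (ξ : Fin n → ℝ) (u : ℕ → Fin m → ℝ) (k : ℕ) :
    stateSeq A B (stateSeq A B ξ u 1) (fun t => u (t + 1)) k = stateSeq A B ξ u (k + 1) := by
  induction k with
  | zero => rfl
  | succ k ih => rw [stateSeq, ih]; rfl

theorem stateSeq_one_mem_outputNulling {n m p : ℕ} {A : Matrix (Fin n) (Fin n) ℝ}
    {B : Matrix (Fin n) (Fin m) ℝ} {C : Matrix (Fin p) (Fin n) ℝ} {D : Matrix (Fin p) (Fin m) ℝ}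
    {ξ : Fin n → ℝ} {u : ℕ → Fin m → ℝ} (hu : ∀ k, C *ᵥ stateSeq A B ξ u k + D *ᵥ u k = 0) :
    stateSeq A B ξ u 1 ∈ outputNulling A B C D :=
  ⟨fun t => u (t + 1), fun k => by rw [stateSeq_stateSeq_one]; exact hu (k + 1)⟩

theorem invMat_mulVec_apply {n m p L : ℕ} (A : Matrix (Fin n) (Fin n) ℝ)
    (B : Matrix (Fin n) (Fin m) ℝ) (C : Matrix (Fin p) (Fin n) ℝ) (D : Matrix (Fin p) (Fin m) ℝ)
    (u : ℕ → Fin m → ℝ) (j : Fin (L + 1)) (r : Fin p) :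
    (invMat A B C D L *ᵥ fun ic => u ic.1 ic.2) (j, r) =
      (D *ᵥ u j) r + ∑ i ∈ Finset.range j, ((C * A ^ ((j : ℕ) - i - 1) * B) *ᵥ u i) r := by
  have hrow : ∀ i : Fin (L + 1), ∑ c, invMat A B C D L (j, r) (i, c) * u i c =
      (if (j : ℕ) = i then (D *ᵥ u i) r else 0) +
        if (i : ℕ) < j then ((C * A ^ ((j : ℕ) - i - 1) * B) *ᵥ u i) r else 0 := by
    intro i
    unfold invMat
    split_ifs <;> first | omega | simp [mulVec, dotProduct]
  have hfilter : (Finset.range (L + 1)).filter (· < (j : ℕ)) = Finset.range j := by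
    ext i; simp only [Finset.mem_filter, Finset.mem_range]; omega
  rw [mulVec, dotProduct, Fintype.sum_prod_type]
  simp only [hrow]
  rw [Finset.sum_add_distrib,
    Fin.sum_univ_eq_sum_range (fun i => if (j : ℕ) = i then (D *ᵥ u i) r else 0),
    Fin.sum_univ_eq_sum_range
      (fun i => if i < (j : ℕ) then ((C * A ^ ((j : ℕ) - i - 1) * B) *ᵥ u i) r else 0),
    Finset.sum_ite_eq, if_pos (Finset.mem_range.2 j.2), ← Finset.sum_filter, hfilter]

theorem obsMat_mulVec_add_invMat_mulVec_apply {n m p L : ℕ} (A : Matrix (Fin n) (Fin n) ℝ)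
    (B : Matrix (Fin n) (Fin m) ℝ) (C : Matrix (Fin p) (Fin n) ℝ) (D : Matrix (Fin p) (Fin m) ℝ)
    (ξ : Fin n → ℝ) (u : ℕ → Fin m → ℝ) (j : Fin (L + 1)) (r : Fin p) :
    (obsMat A C L *ᵥ ξ + invMat A B C D L *ᵥ fun ic => u ic.1 ic.2) (j, r) =
      (C *ᵥ stateSeq A B ξ u j + D *ᵥ u j) r := by
  have hobs : (obsMat A C L *ᵥ ξ) (j, r) = ((C * A ^ (j : ℕ)) *ᵥ ξ) r := rfl
  rw [Pi.add_apply, hobs, invMat_mulVec_apply, stateSeq_eq_pow_mulVec_add_sum]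
  simp only [mulVec_add, mulVec_sum, mulVec_mulVec, Matrix.mul_assoc, Pi.add_apply,
    Finset.sum_apply]
  ring

theorem idZero_mulVec {m L : ℕ} (u : ℕ → Fin m → ℝ) :
    idZero m L *ᵥ (fun ic => u ic.1 ic.2) = u 0 := by
  funext r
  simp [idZero, mulVec, dotProduct, Fintype.sum_prod_type, ite_and, Fin.val_eq_zero_iff]

/-- If `P I_L = [I_m, 0]` and `Ã := A - B P O_L`, then the output-nulling subspace `V₀`
is `Ã`-invariant. -/
theorem outputNulling_tildeA_invariant {n m p L : ℕ}
    (A : Matrix (Fin n) (Fin n) ℝ) (B : Matrix (Fin n) (Fin m) ℝ)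
    (C : Matrix (Fin p) (Fin n) ℝ) (D : Matrix (Fin p) (Fin m) ℝ)
    (P : Matrix (Fin m) (Fin (L + 1) × Fin p) ℝ)
    (hP : P * invMat A B C D L = idZero m L) :
    ∀ ξ ∈ outputNulling A B C D,
      (A - B * P * obsMat A C L).mulVec ξ ∈ outputNulling A B C D := by
  rintro ξ ⟨u, hu⟩
  have hstacked : obsMat A C L *ᵥ ξ = -(invMat A B C D L *ᵥ fun ic => u ic.1 ic.2) :=
    eq_neg_of_add_eq_zero_left <| funext fun ⟨j, r⟩ => by
      rw [obsMat_mulVec_add_invMat_mulVec_apply, hu j, Pi.zero_apply, Pi.zero_apply]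
  have hfeedback : (P * obsMat A C L) *ᵥ ξ = -u 0 := by
    rw [← mulVec_mulVec, hstacked, mulVec_neg, mulVec_mulVec, hP, idZero_mulVec]
  have hstep : (A - B * P * obsMat A C L) *ᵥ ξ = stateSeq A B ξ u 1 := by
    rw [sub_mulVec, Matrix.mul_assoc, ← mulVec_mulVec, hfeedback, mulVec_neg, sub_neg_eq_add]
    rfl
  exact hstep ▸ stateSeq_one_mem_outputNulling hu
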